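/- arXiv:1608.05470 — 3 statements merged into one kernel-verified Lean document; each statement's English description precedes it below -/
import Mathlib

section
/- For every real a > 0, the double integral ∫_0^∞ ∫_0^∞ log((z + y + a)/(y + a)) · e^{−z−y} dz dy equals 1 − a·e^{a}·E₁(a). -/
open MeasureTheory Real

/-- The exponential integral `E₁(x) = ∫ₓ^∞ e^{-t}/t dt`. -/
noncomputable def E1 (x : ℝ) : ℝ := ∫ t in Set.Ioi x, Real.exp (-t) / t

/-!
For `b > 0`, the function `-log((z + b)/b) e^{-z} - e^b E₁(z + b)` is an antiderivative of
`log((z + b)/b) e^{-z}` vanishing at infinity (this is integration by parts against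
`d/dz log((z + b)/b) = 1/(z + b)`, with `∫₀^∞ e^{-z}/(z + b) dz = e^b E₁(b)`), so the inner
integral is `e^{-y} e^{y+a} E₁(y + a) = e^a E₁(y + a)`. Likewise `(u E₁(u) - e^{-u})' = E₁(u)`
gives `∫₀^∞ E₁(y + a) dy = e^{-a} - a E₁(a)`.
-/

open Set Filter Topology

theorem hasDerivAt_integral_Ioi {E : Type*} [NormedAddCommGroup E] [NormedSpace ℝ E]
    [CompleteSpace E] {f : ℝ → E} {c x : ℝ} (hf : IntegrableOn f (Ioi c)) (hcx : c < x)
    (hmeas : StronglyMeasurableAtFilter f (𝓝 x)) (hcont : ContinuousAt f x) :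
    HasDerivAt (fun y => ∫ t in Ioi y, f t) (-f x) x := by
  have htail : (fun y => ∫ t in Ioi y, f t) =ᶠ[𝓝 x]
      fun y => (∫ t in Ioi c, f t) - ∫ t in c..y, f t := by
    filter_upwards [Ioi_mem_nhds hcx] with y hy
    rw [← intervalIntegral.integral_Ioi_sub_Ioi hf (le_of_lt hy), sub_sub_cancel]
  have hcx_int : IntervalIntegrable f volume c x :=
    (intervalIntegrable_iff_integrableOn_Ioc_of_le hcx.le).2 (hf.mono_set Ioc_subset_Ioi_self)
  simpa using ((intervalIntegral.integral_hasDerivAt_right hcx_int hmeas hcont).const_sub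
    _).congr_of_eventuallyEq htail

section ExponentialIntegral

variable {x : ℝ}

theorem integrableOn_exp_neg_div_Ioi {c : ℝ} (hc : 0 < c) :
    IntegrableOn (fun t => exp (-t) / t) (Ioi c) := by
  refine ((integrableOn_exp_neg_Ioi c).const_mul c⁻¹).mono' ?_ ?_
  · exact ((continuous_exp.comp continuous_neg).continuousOn.div continuousOn_id
      fun t ht => (hc.trans ht).ne').aestronglyMeasurable measurableSet_Ioi
  · filter_upwards [ae_restrict_mem measurableSet_Ioi] with t (ht : c < t)
    rw [norm_of_nonneg (div_nonneg (exp_pos _).le (hc.trans ht).le), div_eq_inv_mul]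
    gcongr

theorem E1_nonneg (hx : 0 < x) : 0 ≤ E1 x :=
  setIntegral_nonneg measurableSet_Ioi fun _ ht => div_nonneg (exp_pos _).le (hx.trans ht).le

theorem E1_le (hx : 0 < x) : E1 x ≤ exp (-x) / x :=
  calc E1 x ≤ ∫ t in Ioi x, exp (-t) / x :=
        setIntegral_mono_on (integrableOn_exp_neg_div_Ioi hx)
          ((integrableOn_exp_neg_Ioi x).div_const x) measurableSet_Ioi
          fun _ (ht : x < _) => by gcongr
    _ = exp (-x) / x := by rw [integral_div, integral_exp_neg_Ioi]

theorem hasDerivAt_E1 (hx : 0 < x) : HasDerivAt E1 (-(exp (-x) / x)) x := by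
  have hc : 0 < x / 2 := by positivity
  have hcont : ContinuousOn (fun t => exp (-t) / t) (Ioi (x / 2)) :=
    (continuous_exp.comp continuous_neg).continuousOn.div continuousOn_id
      fun t ht => (hc.trans ht).ne'
  have hmem : x ∈ Ioi (x / 2) := half_lt_self hx
  exact hasDerivAt_integral_Ioi (integrableOn_exp_neg_div_Ioi hc) hmem
    (hcont.stronglyMeasurableAtFilter isOpen_Ioi x hmem) (hcont.continuousAt (Ioi_mem_nhds hmem))

theorem tendsto_E1_atTop : Tendsto E1 atTop (𝓝 0) := by
  refine tendsto_of_tendsto_of_tendsto_of_le_of_le' tendsto_const_nhds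
    tendsto_exp_neg_atTop_nhds_zero ?_ ?_
  · filter_upwards [eventually_gt_atTop 0] with x hx using E1_nonneg hx
  · filter_upwards [eventually_ge_atTop 1] with x hx
    calc E1 x ≤ exp (-x) / x := E1_le (by linarith)
      _ ≤ exp (-x) := div_le_self (exp_pos _).le hx

theorem tendsto_mul_E1_atTop : Tendsto (fun x => x * E1 x) atTop (𝓝 0) := by
  refine tendsto_of_tendsto_of_tendsto_of_le_of_le' tendsto_const_nhds
    tendsto_exp_neg_atTop_nhds_zero ?_ ?_
  · filter_upwards [eventually_gt_atTop 0] with x hx using mul_nonneg hx.le (E1_nonneg hx)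
  · filter_upwards [eventually_gt_atTop 0] with x hx
    calc x * E1 x ≤ x * (exp (-x) / x) := by gcongr; exact E1_le hx
      _ = exp (-x) := mul_div_cancel₀ _ hx.ne'

end ExponentialIntegral

theorem log_add_div_self_nonneg {b z : ℝ} (hb : 0 < b) (hz : 0 ≤ z) :
    0 ≤ log ((z + b) / b) :=
  log_nonneg <| (le_div_iff₀ hb).2 (by linarith)

theorem log_add_div_self_le {b z : ℝ} (hb : 0 < b) (hz : 0 ≤ z) :
    log ((z + b) / b) ≤ z / b := by
  calc log ((z + b) / b) ≤ (z + b) / b - 1 := log_le_sub_one_of_pos (by positivity)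
    _ = z / b := by field_simp; ring

theorem integrableOn_mul_exp_neg_Ioi : IntegrableOn (fun z : ℝ => z * exp (-z)) (Ioi 0) := by
  refine (GammaIntegral_convergent (s := 2) two_pos).congr_fun (fun z _ => ?_) measurableSet_Ioi
  norm_num [mul_comm]

theorem integral_log_add_div_self_mul_exp_neg {b : ℝ} (hb : 0 < b) :
    ∫ z in Ioi (0 : ℝ), log ((z + b) / b) * exp (-z) = exp b * E1 b := by
  have hderiv : ∀ z ∈ Ici (0 : ℝ), HasDerivAt
      (fun z => -(log ((z + b) / b) * exp (-z)) - exp b * E1 (z + b))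
      (log ((z + b) / b) * exp (-z)) z := by
    intro z (hz : 0 ≤ z)
    have hzb : 0 < z + b := by linarith
    have hlog := (((hasDerivAt_id' z).add_const b).div_const b).log (by positivity)
    have hE1 := (hasDerivAt_E1 hzb).comp z ((hasDerivAt_id' z).add_const b)
    refine ((hlog.mul (hasDerivAt_neg z).exp).neg.sub (hE1.const_mul (exp b))).congr_deriv ?_
    rw [show -(z + b) = -z - b by ring, exp_sub]
    field_simp
    ring
  have hbound : ∀ z : ℝ, 0 ≤ z →
      0 ≤ log ((z + b) / b) * exp (-z) ∧ log ((z + b) / b) * exp (-z) ≤ b⁻¹ * (z * exp (-z)) :=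
    fun z hz => ⟨mul_nonneg (log_add_div_self_nonneg hb hz) (exp_pos _).le, by
      rw [← mul_assoc, ← div_eq_inv_mul]
      exact mul_le_mul_of_nonneg_right (log_add_div_self_le hb hz) (exp_pos _).le⟩
  have hint : IntegrableOn (fun z => log ((z + b) / b) * exp (-z)) (Ioi 0) := by
    refine (integrableOn_mul_exp_neg_Ioi.const_mul b⁻¹).mono' ?_ ?_
    · refine ContinuousOn.aestronglyMeasurable ?_ measurableSet_Ioi
      exact ((by fun_prop : Continuous fun z => (z + b) / b).continuousOn.log
        fun z (hz : 0 < z) => by positivity).mul (by fun_prop)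
    · filter_upwards [ae_restrict_mem measurableSet_Ioi] with z (hz : 0 < z)
      rw [norm_of_nonneg (hbound z hz.le).1]
      exact (hbound z hz.le).2
  have hlim : Tendsto (fun z => -(log ((z + b) / b) * exp (-z)) - exp b * E1 (z + b))
      atTop (𝓝 0) := by
    have hprod : Tendsto (fun z => log ((z + b) / b) * exp (-z)) atTop (𝓝 0) := by
      have hdom : Tendsto (fun z : ℝ => b⁻¹ * (z * exp (-z))) atTop (𝓝 0) := by
        simpa using (tendsto_pow_mul_exp_neg_atTop_nhds_zero 1).const_mul b⁻¹
      refine tendsto_of_tendsto_of_tendsto_of_le_of_le' tendsto_const_nhds hdom ?_ ?_ <;>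
        filter_upwards [eventually_ge_atTop 0] with z hz
      exacts [(hbound z hz).1, (hbound z hz).2]
    have hE1 := (tendsto_E1_atTop.comp (tendsto_atTop_add_const_right _ b tendsto_id)).const_mul
      (exp b)
    simpa using hprod.neg.sub hE1
  rw [integral_Ioi_of_hasDerivAt_of_tendsto' hderiv hint hlim]
  simp

theorem integral_E1_add {a : ℝ} (ha : 0 < a) :
    ∫ y in Ioi (0 : ℝ), E1 (y + a) = exp (-a) - a * E1 a := by
  have hshift : Tendsto (fun y => y + a) atTop atTop :=
    tendsto_atTop_add_const_right _ a tendsto_id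
  have hderiv : ∀ y ∈ Ici (0 : ℝ),
      HasDerivAt (fun y => (y + a) * E1 (y + a) - exp (-(y + a))) (E1 (y + a)) y := by
    intro y (hy : 0 ≤ y)
    have hya : 0 < y + a := by linarith
    have hlin := (hasDerivAt_id' y).add_const a
    refine ((hlin.mul ((hasDerivAt_E1 hya).comp y hlin)).sub hlin.neg.exp).congr_deriv ?_
    simp only [Function.comp_apply, Pi.neg_apply]
    field_simp
    ring
  have hint : IntegrableOn (fun y => E1 (y + a)) (Ioi 0) := by
    refine ((integrableOn_exp_neg_Ioi 0).mul_const (exp (-a) / a)).mono' ?_ ?_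
    · exact ContinuousOn.aestronglyMeasurable (fun y (hy : 0 < y) =>
        ((hasDerivAt_E1 (by linarith)).continuousAt.comp
          (continuous_add_const a).continuousAt).continuousWithinAt) measurableSet_Ioi
    · filter_upwards [ae_restrict_mem measurableSet_Ioi] with y (hy : 0 < y)
      have hya : 0 < y + a := by linarith
      rw [norm_of_nonneg (E1_nonneg hya)]
      calc E1 (y + a) ≤ exp (-(y + a)) / (y + a) := E1_le hya
        _ ≤ exp (-(y + a)) / a := by gcongr; linarith
        _ = exp (-y) * (exp (-a) / a) := by rw [neg_add, exp_add, mul_div_assoc]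
  have hlim : Tendsto (fun y => (y + a) * E1 (y + a) - exp (-(y + a))) atTop (𝓝 0) := by
    simpa using
      (tendsto_mul_E1_atTop.comp hshift).sub (tendsto_exp_neg_atTop_nhds_zero.comp hshift)
  rw [integral_Ioi_of_hasDerivAt_of_tendsto' hderiv hint hlim]
  simp

theorem stmt5 (a : ℝ) (ha : 0 < a) :
    (∫ y in Set.Ioi (0 : ℝ), ∫ z in Set.Ioi (0 : ℝ),
        Real.log ((z + y + a) / (y + a)) * Real.exp (-z - y)) =
      1 - a * Real.exp a * E1 a := by
  have hinner : ∀ y ∈ Ioi (0 : ℝ),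
      ∫ z in Ioi (0 : ℝ), log ((z + y + a) / (y + a)) * exp (-z - y) = exp a * E1 (y + a) := by
    intro y (hy : 0 < y)
    have hsplit : ∀ z, log ((z + y + a) / (y + a)) * exp (-z - y)
        = log ((z + (y + a)) / (y + a)) * exp (-z) * exp (-y) := fun z => by
      rw [mul_assoc, ← exp_add, add_assoc, sub_eq_add_neg]
    simp only [hsplit, integral_mul_const,
      integral_log_add_div_self_mul_exp_neg (by linarith : 0 < y + a)]
    rw [mul_right_comm, ← exp_add, add_neg_cancel_comm]
  rw [setIntegral_congr_fun measurableSet_Ioi hinner, integral_const_mul, integral_E1_add ha,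
    mul_sub, ← exp_add, add_neg_cancel, exp_zero, mul_left_comm, mul_assoc]
end

section
/- For all reals λ > 0 and b > 0, ∫_0^∞ log(1 + b·x) · λ·e^{−λx} dx = e^{λ/b} · E₁(λ/b). -/
open MeasureTheory Real Filter Set Topology

lemma E1_comp (lam b : ℝ) (hlam : 0 < lam) (hb : 0 < b) :
    Real.exp (lam / b) * E1 (lam / b)
      = ∫ x in Set.Ioi (0 : ℝ), b * Real.exp (-(lam * x)) / (1 + b * x) := by
  set c := lam / b with hc
  have hc0 : 0 < c := by positivity
  have h1 : E1 c = ∫ y in Ioi (0 : ℝ), Real.exp (-(y + c)) / (y + c) := by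
    rw [E1]
    have key := (measurePreserving_add_right volume c).setIntegral_preimage_emb
      (measurableEmbedding_addRight c) (fun t => Real.exp (-t) / t) (Ioi c)
    have hset : (fun x : ℝ => x + c) ⁻¹' Ioi c = Ioi 0 := by
      ext x; simp
    rw [hset] at key
    rw [← key]
  have h2 := integral_comp_mul_left_Ioi
    (fun y => Real.exp (-(y + c)) / (y + c)) 0 hlam
  simp only [mul_zero] at h2
  have h3 : (∫ y in Ioi (0:ℝ), Real.exp (-(y + c)) / (y + c))
      = lam * ∫ x in Ioi (0:ℝ), Real.exp (-(lam * x + c)) / (lam * x + c) := by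
    rw [h2, smul_eq_mul, ← mul_assoc, mul_inv_cancel₀ hlam.ne', one_mul]
  rw [h1, h3, ← mul_assoc, ← MeasureTheory.integral_const_mul]
  apply setIntegral_congr_fun measurableSet_Ioi
  intro x hx
  have hx0 : (0:ℝ) < x := hx
  have hd : 0 < lam * x + c := by positivity
  have h1' : 0 < 1 + b * x := by positivity
  dsimp only
  rw [show -(lam * x + c) = -(lam * x) + -c by ring, Real.exp_add, Real.exp_neg c]
  rw [hc] at hd ⊢
  field_simp
  ring

lemma aux_integrable_log (lam b : ℝ) (hlam : 0 < lam) (hb : 0 < b) :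
    IntegrableOn (fun x => Real.log (1 + b * x) * (lam * Real.exp (-(lam * x)))) (Ioi 0) := by
  have hdom : IntegrableOn (fun x : ℝ => b * lam * (x * Real.exp (-(lam * x)))) (Ioi 0) := by
    have h := integrableOn_rpow_mul_exp_neg_mul_rpow (p := 1) (s := 1) (b := lam)
      (by norm_num) zero_lt_one hlam
    have h2 := h.const_mul (b * lam)
    simpa only [Real.rpow_one, neg_mul, IntegrableOn] using h2
  apply hdom.integrable.mono
  · apply ContinuousOn.aestronglyMeasurable
    · apply ContinuousOn.mul
      · apply ContinuousOn.log (by fun_prop)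
        intro x hx
        have : (0:ℝ) < x := hx
        positivity
      · fun_prop
    · exact measurableSet_Ioi
  · filter_upwards [ae_restrict_mem measurableSet_Ioi] with x hx
    have hx0 : (0:ℝ) < x := hx
    have h1 : 0 < 1 + b * x := by positivity
    have hlog0 : 0 ≤ Real.log (1 + b * x) := Real.log_nonneg (by nlinarith)
    have hlog : Real.log (1 + b * x) ≤ b * x := by
      have := Real.log_le_sub_one_of_pos h1
      linarith
    rw [Real.norm_eq_abs, Real.norm_eq_abs, abs_mul, abs_of_nonneg hlog0]
    rw [abs_of_pos (by positivity), abs_of_pos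
      (by positivity : (0:ℝ) < b * lam * (x * Real.exp (-(lam * x))))]
    calc Real.log (1 + b * x) * (lam * Real.exp (-(lam * x)))
        ≤ b * x * (lam * Real.exp (-(lam * x))) :=
          mul_le_mul_of_nonneg_right hlog (by positivity)
      _ = b * lam * (x * Real.exp (-(lam * x))) := by ring

lemma aux_integrable_frac (lam b : ℝ) (hlam : 0 < lam) (hb : 0 < b) :
    IntegrableOn (fun x => b / (1 + b * x) * -Real.exp (-(lam * x))) (Ioi 0) := by
  have hdom : IntegrableOn (fun x : ℝ => b * Real.exp (-(lam * x))) (Ioi 0) := by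
    have h := (exp_neg_integrableOn_Ioi 0 hlam).const_mul b
    simpa only [neg_mul, IntegrableOn] using h
  apply hdom.integrable.mono
  · apply ContinuousOn.aestronglyMeasurable
    · apply ContinuousOn.mul
      · apply ContinuousOn.div continuousOn_const (by fun_prop)
        intro x hx
        have : (0:ℝ) < x := hx
        positivity
      · fun_prop
    · exact measurableSet_Ioi
  · filter_upwards [ae_restrict_mem measurableSet_Ioi] with x hx
    have hx0 : (0:ℝ) < x := hx
    have h1 : 0 < 1 + b * x := by positivity
    rw [Real.norm_eq_abs, Real.norm_eq_abs, abs_mul, abs_neg, abs_of_pos (Real.exp_pos _),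
      abs_of_pos (by positivity : (0:ℝ) < b / (1 + b * x)),
      abs_of_pos (by positivity : (0:ℝ) < b * Real.exp (-(lam * x)))]
    apply mul_le_mul_of_nonneg_right _ (Real.exp_pos _).le
    rw [div_le_iff₀ h1]
    nlinarith [mul_pos hb (mul_pos hb hx0)]

theorem stmt7 (lam b : ℝ) (hlam : 0 < lam) (hb : 0 < b) :
    (∫ x in Set.Ioi (0 : ℝ), Real.log (1 + b * x) * (lam * Real.exp (-(lam * x)))) =
      Real.exp (lam / b) * E1 (lam / b) := by
  rw [E1_comp lam b hlam hb]
  have key : (∫ x in Set.Ioi (0 : ℝ), Real.log (1 + b * x) * (lam * Real.exp (-(lam * x))))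
      = (0 : ℝ) - 0 - ∫ x in Set.Ioi (0 : ℝ), b / (1 + b * x) * -Real.exp (-(lam * x)) := by
    apply integral_Ioi_mul_deriv_eq_deriv_mul
      (u := fun x => Real.log (1 + b * x)) (u' := fun x => b / (1 + b * x))
      (v := fun x => -Real.exp (-(lam * x))) (v' := fun x => lam * Real.exp (-(lam * x)))
    · intro x hx
      have hx0 : (0:ℝ) < x := hx
      have h1 : 0 < 1 + b * x := by positivity
      have hinner : HasDerivAt (fun x : ℝ => 1 + b * x) b x := by
        simpa using ((hasDerivAt_id x).const_mul b).const_add 1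
      have := (Real.hasDerivAt_log h1.ne').comp x hinner
      simpa [div_eq_inv_mul, Function.comp_def] using this
    · intro x _
      have hinner : HasDerivAt (fun x : ℝ => -(lam * x)) (-lam) x := by
        simpa [Pi.neg_def] using ((hasDerivAt_id x).const_mul lam).neg
      have h2 := ((Real.hasDerivAt_exp _).comp x hinner).neg
      simpa [mul_comm, Function.comp_def, Pi.neg_def] using h2
    · exact aux_integrable_log lam b hlam hb
    · exact aux_integrable_frac lam b hlam hb
    · have hcont : ContinuousAt (fun x : ℝ => Real.log (1 + b * x) * -Real.exp (-(lam * x))) 0 := by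
        apply ContinuousAt.mul
        · apply ContinuousAt.log (by fun_prop)
          norm_num
        · fun_prop
      have h := hcont.continuousWithinAt (s := Ioi (0:ℝ))
      have h0 : Real.log (1 + b * 0) * -Real.exp (-(lam * 0)) = 0 := by norm_num
      simpa [ContinuousWithinAt, h0, Pi.mul_def] using h
    · have hsq : Tendsto (fun x : ℝ => b * (x * Real.exp (-(lam * x)))) atTop (𝓝 0) := by
        have h := tendsto_rpow_mul_exp_neg_mul_atTop_nhds_zero 1 lam hlam
        simpa using h.const_mul b
      have hfun : ((fun x => Real.log (1 + b * x)) * fun x => -Real.exp (-(lam * x)))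
          = fun x => -(Real.log (1 + b * x) * Real.exp (-(lam * x))) := by
        funext x; simp [Pi.mul_apply]
      rw [hfun, show (𝓝 (0:ℝ)) = 𝓝 (-0) by norm_num]
      apply Tendsto.neg
      apply squeeze_zero' (g := fun x : ℝ => b * (x * Real.exp (-(lam * x))))
      · filter_upwards [eventually_gt_atTop (0:ℝ)] with x hx
        have h1 : 0 < 1 + b * x := by positivity
        have : 0 ≤ Real.log (1 + b * x) := Real.log_nonneg (by nlinarith)
        positivity
      · filter_upwards [eventually_gt_atTop (0:ℝ)] with x hx
        have h1 : 0 < 1 + b * x := by positivity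
        have hlog : Real.log (1 + b * x) ≤ b * x := by
          have := Real.log_le_sub_one_of_pos h1
          linarith
        calc Real.log (1 + b * x) * Real.exp (-(lam * x))
            ≤ b * x * Real.exp (-(lam * x)) :=
              mul_le_mul_of_nonneg_right hlog (Real.exp_pos _).le
          _ = b * (x * Real.exp (-(lam * x))) := by ring
      · exact hsq
  rw [key]
  simp only [sub_zero, zero_sub]
  rw [← integral_neg]
  apply setIntegral_congr_fun measurableSet_Ioi
  intro x hx
  ring
end

section
/- For every real c and every real ξ with 0 < ξ < 1, ∫_1^∞ ( c + log u − 2·log(u+1) ) / ( (u+1)²·(u+ξ) ) du = c·(ξ − 1 + 2·log(2/(1+ξ)))/(2(1−ξ)²) + 1/(1−ξ) − (π² + 12·log²2)/(12(1−ξ)²) + ( 2·( Li₂((ξ−1)/ξ) − Li₂((ξ−1)/(2ξ)) ) − Li₂(−ξ) + 2·log 2·log((ξ+1)/ξ) − log²2 ) / (1−ξ)². -/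
open MeasureTheory Real Filter Set Topology intervalIntegral

/-- The dilogarithm `Li₂(x) = −∫₀ˣ log(1−t)/t dt`. -/
noncomputable def Li2 (x : ℝ) : ℝ := -∫ t in (0 : ℝ)..x, Real.log (1 - t) / t

noncomputable def li2g (t : ℝ) : ℝ := if t = 0 then -1 else Real.log (1 - t) / t

lemma li2g_continuousAt {x : ℝ} (hx : x < 1) : ContinuousAt li2g x := by
  rcases eq_or_ne x 0 with rfl | hx0
  · have hd : HasDerivAt (fun t : ℝ => Real.log (1 - t)) (-1) 0 := by
      have h1 : HasDerivAt (fun t : ℝ => 1 - t) (-1) 0 := by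
        simpa using (hasDerivAt_id (0:ℝ)).const_sub 1
      have h2 : HasDerivAt Real.log 1 ((fun t : ℝ => 1 - t) 0) := by
        simpa using Real.hasDerivAt_log (by norm_num : (1:ℝ) ≠ 0)
      have := h2.comp 0 h1; rw [one_mul] at this; exact this
    have hs := hasDerivAt_iff_tendsto_slope.1 hd
    have heq : Tendsto li2g (𝓝[≠] (0:ℝ)) (𝓝 (-1)) := by
      refine hs.congr' ?_
      filter_upwards [self_mem_nhdsWithin] with t ht
      have ht' : t ≠ 0 := ht
      simp [slope_def_field, li2g, ht', div_eq_mul_inv]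
    have : Tendsto li2g (𝓝 (0:ℝ)) (𝓝 (-1)) := by
      rw [← nhdsNE_sup_pure]
      refine Tendsto.sup heq ?_
      simpa [li2g] using (tendsto_pure_nhds li2g 0)
    simpa [ContinuousAt, li2g] using this
  · have hcont : ContinuousAt (fun t : ℝ => Real.log (1 - t) / t) x := by
      exact (((Real.continuousAt_log (by simpa using sub_ne_zero_of_ne (ne_of_lt hx).symm)).comp
        ((continuous_const.sub continuous_id).continuousAt))).div continuousAt_id hx0
    refine hcont.congr ?_
    filter_upwards [isOpen_ne.mem_nhds hx0] with t ht
    simp [li2g, ht]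

lemma li2g_continuousOn : ContinuousOn li2g (Set.Iio 1) :=
  fun x hx => (li2g_continuousAt hx).continuousWithinAt

lemma li2g_intervalIntegrable {x : ℝ} (hx : x < 1) :
    IntervalIntegrable li2g volume 0 x := by
  refine (li2g_continuousOn.mono ?_).intervalIntegrable
  intro t ht
  rcases Set.mem_uIcc.1 ht with h | h
  · exact lt_of_le_of_lt h.2 hx
  · exact lt_of_le_of_lt h.2 (by norm_num)

lemma Li2_eq (x : ℝ) : Li2 x = -∫ t in (0:ℝ)..x, li2g t := by
  unfold Li2
  congr 1
  refine intervalIntegral.integral_congr_ae ?_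
  have h0 : ∀ᵐ (t:ℝ), t ≠ (0:ℝ) := by
    rw [ae_iff]
    simpa using measure_singleton (0:ℝ)
  filter_upwards [h0] with t ht _
  simp [li2g, ht]

lemma Li2_zero : Li2 0 = 0 := by simp [Li2]

lemma Li2_hasDerivAt {x : ℝ} (hx : x < 1) : HasDerivAt Li2 (-li2g x) x := by
  have h : HasDerivAt (fun y => ∫ t in (0:ℝ)..y, li2g t) (li2g x) x := by
    refine intervalIntegral.integral_hasDerivAt_right (li2g_intervalIntegrable hx)
      (li2g_continuousOn.stronglyMeasurableAtFilter isOpen_Iio x hx) (li2g_continuousAt hx)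
  have : Li2 = fun y => -∫ t in (0:ℝ)..y, li2g t := funext Li2_eq
  rw [this]
  exact h.neg

lemma Li2_hasDerivAt' {x : ℝ} (h1 : x < 1) (h0 : x ≠ 0) :
    HasDerivAt Li2 (-(Real.log (1 - x) / x)) x := by
  simpa [li2g, h0] using Li2_hasDerivAt h1

lemma Li2_continuousAt {x : ℝ} (hx : x < 1) : ContinuousAt Li2 x :=
  (Li2_hasDerivAt hx).continuousAt

-- Alternating Basel sum
lemma hasSum_alt : HasSum (fun n : ℕ => (-1:ℝ)^n / ((n:ℝ)+1)^2) (π^2/12) := by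
  have h6 : HasSum (fun n : ℕ => 1 / ((n:ℝ))^2) (π^2/6) := hasSum_zeta_two
  have h1 : HasSum (fun n : ℕ => 1 / ((n:ℝ)+1)^2) (π^2/6) := by
    have h := (hasSum_nat_add_iff' (f := fun n : ℕ => 1/((n:ℝ))^2) 1).2 h6
    have heq : (fun n : ℕ => (1:ℝ)/(((n+1:ℕ):ℝ))^2) = fun n : ℕ => 1/((n:ℝ)+1)^2 := by
      funext n; push_cast; ring_nf
    simpa [heq] using h
  have hodd : HasSum (fun k : ℕ => 2 / ((2*(k:ℝ)+2))^2) (π^2/12) := by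
    have h := h1.mul_left (1/2)
    have heq : (fun k : ℕ => (1:ℝ)/2 * (1/((k:ℝ)+1)^2)) = fun k : ℕ => 2/((2*(k:ℝ)+2))^2 := by
      funext k
      have hk : ((2:ℝ)*(k:ℝ)+2)^2 = 4*((k:ℝ)+1)^2 := by ring
      have hk2 : ((k:ℝ)+1)^2 ≠ 0 := by positivity
      rw [hk]; field_simp; ring
    rw [heq] at h
    rw [show (π^2/12 : ℝ) = 1/2 * (π^2/6) by ring]; exact h
  have he : HasSum (fun k : ℕ => (1 - (-1:ℝ)^((2*k : ℕ))) / (((2*k : ℕ):ℝ)+1)^2) 0 := by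
    have heq : (fun k : ℕ => (1 - (-1:ℝ)^((2*k : ℕ))) / (((2*k : ℕ):ℝ)+1)^2)
        = fun _ : ℕ => (0:ℝ) := by
      funext k; simp [pow_mul]
    rw [heq]; exact hasSum_zero
  have ho : HasSum (fun k : ℕ => (1 - (-1:ℝ)^((2*k+1 : ℕ))) / (((2*k+1 : ℕ):ℝ)+1)^2)
      (π^2/12) := by
    have heq : (fun k : ℕ => (1 - (-1:ℝ)^((2*k+1 : ℕ))) / (((2*k+1 : ℕ):ℝ)+1)^2)
        = fun k : ℕ => 2 / ((2*(k:ℝ)+2))^2 := by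
      funext k
      rw [pow_succ, pow_mul]
      push_cast
      norm_num
      ring_nf
    rw [heq]; exact hodd
  have hd : HasSum (fun n : ℕ => (1 - (-1:ℝ)^n) / ((n:ℝ)+1)^2) (0 + π^2/12) :=
    HasSum.even_add_odd (f := fun n : ℕ => (1 - (-1:ℝ)^n) / ((n:ℝ)+1)^2) he ho
  have heq2 : (fun n : ℕ => (-1:ℝ)^n / ((n:ℝ)+1)^2)
      = fun n : ℕ => 1/((n:ℝ)+1)^2 - (1 - (-1:ℝ)^n)/((n:ℝ)+1)^2 := by
    funext n; rw [div_sub_div_same]; ring_nf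
  rw [heq2, show (π^2/12 : ℝ) = π^2/6 - (0 + π^2/12) by ring]
  exact h1.sub hd

lemma summable_inv_sq : Summable (fun n : ℕ => 1/((n:ℝ)+1)^2) := by
  have h := (summable_nat_add_iff (f := fun n : ℕ => 1/((n:ℝ))^2) 1).2 hasSum_zeta_two.summable
  refine h.congr ?_
  intro n; push_cast; ring_nf

lemma integral_Ioc_pow_div (n : ℕ) :
    ∫ t in Set.Ioc (-1:ℝ) 0, t^n/((n:ℝ)+1) = (-1:ℝ)^n/((n:ℝ)+1)^2 := by
  rw [← intervalIntegral.integral_of_le (by norm_num : (-1:ℝ) ≤ 0)]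
  rw [intervalIntegral.integral_div, integral_pow]
  have hn : ((n:ℝ)+1) ≠ 0 := by positivity
  rw [zero_pow (Nat.succ_ne_zero n), pow_succ]
  field_simp
  ring

lemma integral_Ioc_abs_pow_div (n : ℕ) :
    ∫ t in Set.Ioc (-1:ℝ) 0, ‖t^n/((n:ℝ)+1)‖ = 1/((n:ℝ)+1)^2 := by
  have hn : (0:ℝ) < (n:ℝ)+1 := by positivity
  have h1 : ∀ t : ℝ, ‖t^n/((n:ℝ)+1)‖ = |t|^n/((n:ℝ)+1) := by
    intro t
    rw [Real.norm_eq_abs, abs_div, abs_pow, abs_of_pos hn]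
  simp_rw [h1]
  rw [← intervalIntegral.integral_of_le (by norm_num : (-1:ℝ) ≤ 0)]
  have h2 := intervalIntegral.integral_comp_neg (a := (0:ℝ)) (b := 1)
    (fun t => |t|^n/((n:ℝ)+1))
  simp only [neg_zero] at h2
  rw [← h2]
  have h3 : ∫ x in (0:ℝ)..1, |(-x)|^n/((n:ℝ)+1) = ∫ x in (0:ℝ)..1, x^n/((n:ℝ)+1) := by
    refine intervalIntegral.integral_congr ?_
    intro x hx
    rw [Set.uIcc_of_le (by norm_num : (0:ℝ) ≤ 1)] at hx
    simp [abs_neg, abs_of_nonneg hx.1]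
  rw [h3, intervalIntegral.integral_div, integral_pow]
  rw [zero_pow (Nat.succ_ne_zero n), one_pow]
  field_simp
  ring

lemma Li2_neg_one : Li2 (-1) = -(π^2/12) := by
  have hstep : Li2 (-1) = ∫ t in Set.Ioc (-1:ℝ) 0, Real.log (1-t)/t := by
    rw [Li2, intervalIntegral.integral_symm, neg_neg,
      intervalIntegral.integral_of_le (by norm_num : (-1:ℝ) ≤ 0)]
  rw [hstep]
  have hae : ∀ᵐ t : ℝ, t ∈ Set.Ioc (-1:ℝ) 0 →
      Real.log (1-t)/t = -∑' n : ℕ, t^n/((n:ℝ)+1) := by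
    have h0 : ∀ᵐ (t:ℝ), t ≠ (0:ℝ) := by
      rw [ae_iff]; simpa using measure_singleton (0:ℝ)
    filter_upwards [h0] with t ht0 htm
    have habs : |t| < 1 := by
      rw [abs_lt]; exact ⟨htm.1, lt_of_le_of_lt htm.2 one_pos⟩
    have h := hasSum_pow_div_log_of_abs_lt_one habs
    have h2 := h.mul_left t⁻¹
    have heq : (fun n : ℕ => t⁻¹ * (t^(n+1)/((n:ℝ)+1))) = fun n : ℕ => t^n/((n:ℝ)+1) := by
      funext n
      rw [pow_succ]
      field_simp
    rw [show (fun n : ℕ => t⁻¹ * (t ^ (n + 1) / (↑n + 1))) = fun n : ℕ => t^n/((n:ℝ)+1)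
      from heq] at h2
    rw [h2.tsum_eq]
    field_simp
  rw [MeasureTheory.setIntegral_congr_ae measurableSet_Ioc hae]
  rw [MeasureTheory.integral_neg]
  have hint : ∀ n : ℕ, Integrable (fun t : ℝ => t^n/((n:ℝ)+1))
      (volume.restrict (Set.Ioc (-1:ℝ) 0)) := by
    intro n
    exact ((continuous_pow n).div_const _).integrableOn_Ioc
  have hsum : Summable (fun n : ℕ => ∫ t in Set.Ioc (-1:ℝ) 0, ‖t^n/((n:ℝ)+1)‖) := by
    refine summable_inv_sq.congr ?_
    intro n
    rw [integral_Ioc_abs_pow_div]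
  have hswap := MeasureTheory.integral_tsum_of_summable_integral_norm hint hsum
  rw [← hswap]
  have : (fun n : ℕ => ∫ t in Set.Ioc (-1:ℝ) 0, t^n/((n:ℝ)+1))
      = fun n : ℕ => (-1:ℝ)^n/((n:ℝ)+1)^2 := by
    funext n; exact integral_Ioc_pow_div n
  rw [this, hasSum_alt.tsum_eq]

lemma hasDerivAt_Li2_neg_div {a u : ℝ} (ha : 0 < a) (hu : 0 < u) :
    HasDerivAt (fun y : ℝ => Li2 (-a/y)) ((Real.log (u+a) - Real.log u)/u) u := by
  have hne : u ≠ 0 := ne_of_gt hu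
  have hinner : HasDerivAt (fun y : ℝ => -a/y) (a/u^2) u := by
    have h := ((hasDerivAt_const u (-a)).div (hasDerivAt_id u) hne)
    refine h.congr_deriv ?_
    simp only [id]; ring
  have hx1 : -a/u < 1 := by
    have : -a/u < 0 := div_neg_of_neg_of_pos (by linarith) hu
    linarith
  have hx0 : -a/u ≠ 0 := by
    refine div_ne_zero ?_ hne
    exact ne_of_lt (by linarith)
  have houter := Li2_hasDerivAt' hx1 hx0
  have hcomp := houter.comp u hinner
  refine hcomp.congr_deriv ?_
  have h1m : 1 - (-a/u) = (u+a)/u := by field_simp; ring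
  rw [h1m, Real.log_div (by positivity) hne]
  field_simp

lemma hasDerivAt_Li2_G {ξ u : ℝ} (hξ0 : 0 < ξ) (hξ1 : ξ < 1) (hu : 0 < u) :
    HasDerivAt (fun y : ℝ => Li2 ((ξ-1)*y/(ξ*(y+1))))
      (-((Real.log (u+ξ) - Real.log ξ - Real.log (u+1))*(1/u - 1/(u+1)))) u := by
  have hu1 : (0:ℝ) < u + 1 := by linarith
  have hξne : ξ ≠ 0 := ne_of_gt hξ0
  have hξ1ne : ξ - 1 ≠ 0 := by linarith
  have hdenne : ξ*(u+1) ≠ 0 := by positivity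
  have hf : HasDerivAt (fun y : ℝ => (ξ-1)*y) (ξ-1) u := by
    simpa using (hasDerivAt_id u).const_mul (ξ-1)
  have hg : HasDerivAt (fun y : ℝ => ξ*(y+1)) ξ u := by
    simpa using ((hasDerivAt_id u).add_const 1).const_mul ξ
  have hinner := hf.div hg hdenne
  have hx : (ξ-1)*u/(ξ*(u+1)) < 0 := by
    apply div_neg_of_neg_of_pos
    · exact mul_neg_of_neg_of_pos (by linarith) hu
    · positivity
  have hx1 : (ξ-1)*u/(ξ*(u+1)) < 1 := by linarith
  have hx0 : (ξ-1)*u/(ξ*(u+1)) ≠ 0 := ne_of_lt hx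
  have houter := Li2_hasDerivAt' hx1 hx0
  have hcomp := houter.comp u hinner
  refine hcomp.congr_deriv ?_
  have h1m : 1 - (ξ-1)*u/(ξ*(u+1)) = (u+ξ)/(ξ*(u+1)) := by
    field_simp
    ring
  rw [h1m, Real.log_div (by positivity) hdenne, Real.log_mul hξne (ne_of_gt hu1)]
  field_simp
  ring

noncomputable def Fad (c ξ : ℝ) : ℝ → ℝ := fun u =>
  -(1/(1-ξ)) * (-c/(u+1) - Real.log u/(u+1) + Real.log u - Real.log (u+1)
      + 2*Real.log (u+1)/(u+1) + 2/(u+1))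
  + (1/(1-ξ)^2) * (c*(Real.log (u+ξ) - Real.log (u+1))
      + (Real.log u*(Real.log (u+ξ) - Real.log (u+1)) - Li2 (-ξ/u) + Li2 (-1/u))
      - 2*(Real.log (u+1)*(Real.log (u+ξ) - Real.log ξ - Real.log (u+1))
            - Li2 (-ξ/u) + Li2 (-1/u) + Real.log ξ*Real.log u
            - Li2 ((ξ-1)*u/(ξ*(u+1)))))

lemma hasDerivAt_Fad {c ξ : ℝ} (hξ0 : 0 < ξ) (hξ1 : ξ < 1) {u : ℝ} (hu : 0 < u) :
    HasDerivAt (Fad c ξ) ((c + Real.log u - 2*Real.log (u+1))/((u+1)^2*(u+ξ))) u := by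
  have hu1 : (0:ℝ) < u + 1 := by linarith
  have huξ : (0:ℝ) < u + ξ := by linarith
  have hne : u ≠ 0 := ne_of_gt hu
  have hne1 : u + 1 ≠ 0 := ne_of_gt hu1
  have hneξ : u + ξ ≠ 0 := ne_of_gt huξ
  have h1ξ : (1:ℝ) - ξ ≠ 0 := by linarith
  have hden : HasDerivAt (fun y : ℝ => y + 1) 1 u := (hasDerivAt_id u).add_const 1
  have hdenξ : HasDerivAt (fun y : ℝ => y + ξ) 1 u := (hasDerivAt_id u).add_const ξ
  have hlogu : HasDerivAt (fun y : ℝ => Real.log y) u⁻¹ u := Real.hasDerivAt_log hne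
  have hlogu1 : HasDerivAt (fun y : ℝ => Real.log (y+1)) (u+1)⁻¹ u := by
    have := (Real.hasDerivAt_log hne1).comp u hden
    simpa [Function.comp_def] using this
  have hloguξ : HasDerivAt (fun y : ℝ => Real.log (y+ξ)) (u+ξ)⁻¹ u := by
    have := (Real.hasDerivAt_log hneξ).comp u hdenξ
    simpa [Function.comp_def] using this
  have hcξ := hasDerivAt_Li2_neg_div hξ0 hu
  have hc1 := hasDerivAt_Li2_neg_div one_pos hu
  have hcG := hasDerivAt_Li2_G hξ0 hξ1 hu
  -- P0
  have hP0 : HasDerivAt (fun y : ℝ => -c/(y+1) - Real.log y/(y+1) + Real.log y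
      - Real.log (y+1) + 2*Real.log (y+1)/(y+1) + 2/(y+1))
      ((c + Real.log u - 2*Real.log (u+1))/(u+1)^2) u := by
    have hA := (hasDerivAt_const u (-c)).div hden hne1
    have hB := hlogu.div hden hne1
    have hE := (hlogu1.const_mul 2).div hden hne1
    have hF2 := (hasDerivAt_const u (2:ℝ)).div hden hne1
    have := ((((hA.sub hB).add hlogu).sub hlogu1).add hE).add hF2
    refine this.congr_deriv ?_
    field_simp
    ring
  -- Pc
  have hPc : HasDerivAt (fun y : ℝ => c*(Real.log (y+ξ) - Real.log (y+1)))
      (c*(1/(u+ξ) - 1/(u+1))) u := by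
    have := (hloguξ.sub hlogu1).const_mul c
    refine this.congr_deriv ?_
    field_simp
  -- P1
  have hP1 : HasDerivAt (fun y : ℝ => Real.log y*(Real.log (y+ξ) - Real.log (y+1))
      - Li2 (-ξ/y) + Li2 (-1/y)) (Real.log u*(1/(u+ξ) - 1/(u+1))) u := by
    have := ((hlogu.mul (hloguξ.sub hlogu1)).sub hcξ).add hc1
    refine this.congr_deriv ?_
    simp only [Pi.sub_apply]
    field_simp
    ring
  -- P2
  have hP2 : HasDerivAt (fun y : ℝ => Real.log (y+1)*(Real.log (y+ξ) - Real.log ξ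
      - Real.log (y+1)) - Li2 (-ξ/y) + Li2 (-1/y) + Real.log ξ*Real.log y
      - Li2 ((ξ-1)*y/(ξ*(y+1)))) (Real.log (u+1)*(1/(u+ξ) - 1/(u+1))) u := by
    have := ((((hlogu1.mul ((hloguξ.sub (hasDerivAt_const u (Real.log ξ))).sub
      hlogu1)).sub hcξ).add hc1).add (hlogu.const_mul (Real.log ξ))).sub hcG
    refine this.congr_deriv ?_
    simp only [Pi.sub_apply]
    field_simp
    ring
  have htot := (hP0.const_mul (-(1/(1-ξ)))).add
    (((hPc.add hP1).sub (hP2.const_mul 2)).const_mul (1/(1-ξ)^2))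
  refine htot.congr_deriv ?_
  field_simp
  ring

lemma tendsto_ratio (a b : ℝ) :
    Tendsto (fun u : ℝ => (u+a)/(u+b)) atTop (𝓝 1) := by
  have h : Tendsto (fun u : ℝ => 1 + (a-b)/(u+b)) atTop (𝓝 (1+0)) := by
    refine tendsto_const_nhds.add ?_
    exact Tendsto.div_atTop tendsto_const_nhds (tendsto_atTop_add_const_right atTop b tendsto_id)
  rw [add_zero] at h
  refine Tendsto.congr' ?_ h
  filter_upwards [eventually_gt_atTop (max 0 (-b))] with u hu
  have hub : 0 < u + b := by
    have := lt_of_le_of_lt (le_max_right 0 (-b)) hu; linarith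
  field_simp
  ring

lemma tendsto_log_div_add (a : ℝ) :
    Tendsto (fun u : ℝ => Real.log u / (u + a)) atTop (𝓝 0) := by
  have h0 : Tendsto (fun u : ℝ => Real.log u / u) atTop (𝓝 0) :=
    Real.isLittleO_log_id_atTop.tendsto_div_nhds_zero
  have h1 : Tendsto (fun u : ℝ => (u+0)/(u+a)) atTop (𝓝 1) := tendsto_ratio 0 a
  have h := h0.mul h1
  rw [zero_mul] at h
  refine Tendsto.congr' ?_ h
  filter_upwards [eventually_gt_atTop (max 1 (-a))] with u hu
  have hu1 : 1 < u := lt_of_le_of_lt (le_max_left 1 (-a)) hu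
  have hua : 0 < u + a := by
    have := lt_of_le_of_lt (le_max_right 1 (-a)) hu; linarith
  rw [add_zero]
  field_simp

lemma tendsto_log_add_div_add (b a : ℝ) :
    Tendsto (fun u : ℝ => Real.log (u+b) / (u + a)) atTop (𝓝 0) := by
  have h := (tendsto_log_div_add (a-b)).comp (tendsto_atTop_add_const_right atTop b tendsto_id)
  refine Tendsto.congr ?_ h
  intro u
  simp only [Function.comp_apply, id_eq]
  rw [show u + b + (a-b) = u + a by ring]

lemma tendsto_log_sub_log (a b : ℝ) :
    Tendsto (fun u : ℝ => Real.log (u+a) - Real.log (u+b)) atTop (𝓝 0) := by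
  have h1 := tendsto_ratio a b
  have h := ((Real.continuousAt_log one_ne_zero).tendsto.comp h1)
  rw [Real.log_one] at h
  refine Tendsto.congr' ?_ h
  filter_upwards [eventually_gt_atTop (max 0 (max (-a) (-b)))] with u hu
  have hua : 0 < u + a := by
    have := lt_of_le_of_lt (le_trans (le_max_left (-a) (-b)) (le_max_right _ _)) hu; linarith
  have hub : 0 < u + b := by
    have := lt_of_le_of_lt (le_trans (le_max_right (-a) (-b)) (le_max_right _ _)) hu; linarith
  simp only [Function.comp_apply]
  rw [Real.log_div (ne_of_gt hua) (ne_of_gt hub)]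

lemma tendsto_log_mul_logdiff {ξ : ℝ} (hξ0 : 0 < ξ) (hξ1 : ξ < 1) (b : ℝ) (hb : 0 ≤ b) :
    Tendsto (fun u : ℝ => Real.log (u+b) * (Real.log (u+ξ) - Real.log (u+1)))
      atTop (𝓝 0) := by
  have hlow : Tendsto (fun u : ℝ => Real.log (u+b) * (ξ-1) / (u+ξ)) atTop (𝓝 0) := by
    have := (tendsto_log_add_div_add b ξ).const_mul (ξ-1)
    rw [mul_zero] at this
    refine Tendsto.congr ?_ this
    intro u; ring
  have hhigh : Tendsto (fun u : ℝ => Real.log (u+b) * (ξ-1) / (u+1)) atTop (𝓝 0) := by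
    have := (tendsto_log_add_div_add b 1).const_mul (ξ-1)
    rw [mul_zero] at this
    refine Tendsto.congr ?_ this
    intro u; ring
  refine tendsto_of_tendsto_of_tendsto_of_le_of_le' hlow hhigh ?_ ?_
  · filter_upwards [eventually_ge_atTop 1] with u hu
    have hu0 : (0:ℝ) < u := by linarith
    have hu1 : (0:ℝ) < u + 1 := by linarith
    have huξ : (0:ℝ) < u + ξ := by linarith
    have hm : 0 ≤ Real.log (u+b) := Real.log_nonneg (by linarith)
    have hy : (0:ℝ) < (u+ξ)/(u+1) := by positivity
    have hlog : (ξ-1)/(u+ξ) ≤ Real.log (u+ξ) - Real.log (u+1) := by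
      have h1 : Real.log ((u+1)/(u+ξ)) ≤ (u+1)/(u+ξ) - 1 :=
        Real.log_le_sub_one_of_pos (by positivity)
      rw [Real.log_div (ne_of_gt hu1) (ne_of_gt huξ)] at h1
      have h2 : (u+1)/(u+ξ) - 1 = (1-ξ)/(u+ξ) := by field_simp; ring
      rw [h2] at h1
      have := neg_le_neg h1
      rw [neg_sub] at this
      calc (ξ-1)/(u+ξ) = -((1-ξ)/(u+ξ)) := by ring
        _ ≤ Real.log (u+ξ) - Real.log (u+1) := this
    calc Real.log (u+b) * (ξ-1) / (u+ξ) = Real.log (u+b) * ((ξ-1)/(u+ξ)) := by ring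
      _ ≤ Real.log (u+b) * (Real.log (u+ξ) - Real.log (u+1)) :=
          mul_le_mul_of_nonneg_left hlog hm
  · filter_upwards [eventually_ge_atTop 1] with u hu
    have hu1 : (0:ℝ) < u + 1 := by linarith
    have huξ : (0:ℝ) < u + ξ := by linarith
    have hm : 0 ≤ Real.log (u+b) := Real.log_nonneg (by linarith)
    have hlog : Real.log (u+ξ) - Real.log (u+1) ≤ (ξ-1)/(u+1) := by
      have h1 : Real.log ((u+ξ)/(u+1)) ≤ (u+ξ)/(u+1) - 1 :=
        Real.log_le_sub_one_of_pos (by positivity)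
      rw [Real.log_div (ne_of_gt huξ) (ne_of_gt hu1)] at h1
      have h2 : (u+ξ)/(u+1) - 1 = (ξ-1)/(u+1) := by field_simp; ring
      rwa [h2] at h1
    calc Real.log (u+b) * (Real.log (u+ξ) - Real.log (u+1))
        ≤ Real.log (u+b) * ((ξ-1)/(u+1)) := mul_le_mul_of_nonneg_left hlog hm
      _ = Real.log (u+b) * (ξ-1) / (u+1) := by ring

lemma tendsto_Fad {c ξ : ℝ} (hξ0 : 0 < ξ) (hξ1 : ξ < 1) :
    Tendsto (Fad c ξ) atTop (𝓝 (2*(1/(1-ξ)^2) * Li2 ((ξ-1)/ξ))) := by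
  have hK : (ξ-1)/ξ < 1 := by
    have : (ξ-1)/ξ < 0 := div_neg_of_neg_of_pos (by linarith) hξ0
    linarith
  -- atomic limits
  have t1 : Tendsto (fun u : ℝ => -c/(u+1)) atTop (𝓝 0) :=
    Tendsto.div_atTop tendsto_const_nhds (tendsto_atTop_add_const_right atTop 1 tendsto_id)
  have t2 : Tendsto (fun u : ℝ => Real.log u/(u+1)) atTop (𝓝 0) := tendsto_log_div_add 1
  have t3 : Tendsto (fun u : ℝ => Real.log u - Real.log (u+1)) atTop (𝓝 0) := by
    have := tendsto_log_sub_log 0 1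
    refine Tendsto.congr ?_ this
    intro u; rw [add_zero]
  have t4 : Tendsto (fun u : ℝ => Real.log (u+1)/(u+1)) atTop (𝓝 0) :=
    tendsto_log_add_div_add 1 1
  have t5 : Tendsto (fun u : ℝ => (2:ℝ)/(u+1)) atTop (𝓝 0) :=
    Tendsto.div_atTop tendsto_const_nhds (tendsto_atTop_add_const_right atTop 1 tendsto_id)
  have t6 : Tendsto (fun u : ℝ => Real.log (u+ξ) - Real.log (u+1)) atTop (𝓝 0) :=
    tendsto_log_sub_log ξ 1
  have t7 : Tendsto (fun u : ℝ => Real.log u * (Real.log (u+ξ) - Real.log (u+1)))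
      atTop (𝓝 0) := by
    have := tendsto_log_mul_logdiff hξ0 hξ1 0 le_rfl
    refine Tendsto.congr ?_ this
    intro u; rw [add_zero]
  have t8 : Tendsto (fun u : ℝ => Li2 (-ξ/u)) atTop (𝓝 0) := by
    have hin : Tendsto (fun u : ℝ => -ξ/u) atTop (𝓝 0) :=
      Tendsto.div_atTop tendsto_const_nhds tendsto_id
    have := (Li2_continuousAt (by norm_num : (0:ℝ) < 1)).tendsto.comp hin
    rwa [Li2_zero] at this
  have t9 : Tendsto (fun u : ℝ => Li2 (-1/u)) atTop (𝓝 0) := by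
    have hin : Tendsto (fun u : ℝ => -1/u) atTop (𝓝 (0:ℝ)) :=
      Tendsto.div_atTop tendsto_const_nhds tendsto_id
    have := (Li2_continuousAt (by norm_num : (0:ℝ) < 1)).tendsto.comp hin
    rwa [Li2_zero] at this
  have t10 : Tendsto (fun u : ℝ => Real.log (u+1) * (Real.log (u+ξ) - Real.log (u+1)))
      atTop (𝓝 0) := tendsto_log_mul_logdiff hξ0 hξ1 1 zero_le_one
  have t11 : Tendsto (fun u : ℝ => Real.log ξ * (Real.log (u+1) - Real.log u))
      atTop (𝓝 0) := by
    have h := (tendsto_log_sub_log 1 0).const_mul (Real.log ξ)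
    rw [mul_zero] at h
    refine Tendsto.congr ?_ h
    intro u; rw [add_zero]
  have t12 : Tendsto (fun u : ℝ => Li2 ((ξ-1)*u/(ξ*(u+1)))) atTop (𝓝 (Li2 ((ξ-1)/ξ))) := by
    have hin : Tendsto (fun u : ℝ => (ξ-1)*u/(ξ*(u+1))) atTop (𝓝 ((ξ-1)/ξ)) := by
      have h0 : Tendsto (fun u : ℝ => (ξ-1)/ξ * ((u+0)/(u+1))) atTop (𝓝 ((ξ-1)/ξ * 1)) :=
        tendsto_const_nhds.mul (tendsto_ratio 0 1)
      rw [mul_one] at h0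
      refine Tendsto.congr' ?_ h0
      filter_upwards [eventually_gt_atTop 0] with u hu
      have : u + 1 ≠ 0 := by linarith
      rw [add_zero]
      field_simp
    exact (Li2_continuousAt hK).tendsto.comp hin
  have H := (((((t1.sub t2).add t3).add (t4.const_mul 2)).add t5).const_mul (-(1/(1-ξ)))).add
    ((((t6.const_mul c).add ((t7.sub t8).add t9)).sub
      (((((t10.sub t11).sub t8).add t9).sub t12).const_mul 2)).const_mul (1/(1-ξ)^2))
  have hval : (-(1/(1-ξ)))*((((0 - 0) + 0 + 2*0) + 0):ℝ)
      + (1/(1-ξ)^2)*((c*0 + ((0 - 0) + 0)) - 2*((((0 - 0) - 0) + 0) - Li2 ((ξ-1)/ξ)))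
      = 2*(1/(1-ξ)^2) * Li2 ((ξ-1)/ξ) := by ring
  rw [hval] at H
  refine Tendsto.congr ?_ H
  intro u
  simp only [Fad]
  ring

lemma integrand_integrable (c ξ : ℝ) (hξ0 : 0 < ξ) :
    IntegrableOn (fun u : ℝ => (c + Real.log u - 2*Real.log (u+1))/((u+1)^2*(u+ξ)))
      (Set.Ioi 1) := by
  have hmeas : AEStronglyMeasurable
      (fun u : ℝ => (c + Real.log u - 2*Real.log (u+1))/((u+1)^2*(u+ξ)))
      (volume.restrict (Set.Ioi (1:ℝ))) := by
    refine ContinuousOn.aestronglyMeasurable ?_ measurableSet_Ioi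
    intro u hu
    have hu1 : (1:ℝ) < u := hu
    have h1 : (0:ℝ) < u := by linarith
    have h2 : (0:ℝ) < u + 1 := by linarith
    have h3 : (0:ℝ) < u + ξ := by linarith
    refine ContinuousAt.continuousWithinAt ?_
    refine ContinuousAt.div ?_ ?_ (by positivity)
    · refine (continuousAt_const.add (Real.continuousAt_log (ne_of_gt h1))).sub ?_
      refine continuousAt_const.mul ?_
      have hg : ContinuousAt (fun y : ℝ => y + 1) u := continuousAt_id.add continuousAt_const
      exact ContinuousAt.comp (f := fun y : ℝ => y + 1) (x := u) (Real.continuousAt_log (ne_of_gt h2)) hg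
    · exact ((continuousAt_id.add continuousAt_const).pow 2).mul
        (continuousAt_id.add continuousAt_const)
  refine Integrable.mono' (g := fun u : ℝ => (|c|+5) * u^(-2:ℝ)) ?_ hmeas ?_
  · exact (integrableOn_Ioi_rpow_of_lt (by norm_num : (-2:ℝ) < -1) one_pos).const_mul _
  · filter_upwards [ae_restrict_mem measurableSet_Ioi] with u hu
    have hu1 : (1:ℝ) < u := hu
    have h0 : (0:ℝ) < u := by linarith
    have h2 : (0:ℝ) < u + 1 := by linarith
    have h3 : (0:ℝ) < u + ξ := by linarith
    have hden : (0:ℝ) < (u+1)^2*(u+ξ) := by positivity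
    rw [Real.norm_eq_abs, abs_div, abs_of_pos hden]
    have hnum : |c + Real.log u - 2*Real.log (u+1)| ≤ (|c|+5)*u := by
      have hlu : |Real.log u| ≤ u := by
        rw [abs_of_nonneg (Real.log_nonneg (le_of_lt hu1))]
        linarith [Real.log_le_sub_one_of_pos h0]
      have hlu1 : |Real.log (u+1)| ≤ u := by
        rw [abs_of_nonneg (Real.log_nonneg (by linarith))]
        linarith [Real.log_le_sub_one_of_pos h2]
      have hc : |c| ≤ |c| * u := by nlinarith [abs_nonneg c]
      calc |c + Real.log u - 2*Real.log (u+1)|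
          ≤ |c + Real.log u| + |2*Real.log (u+1)| := abs_sub _ _
        _ ≤ |c| + |Real.log u| + 2 * |Real.log (u+1)| := by
            rw [abs_mul, abs_two]
            exact add_le_add_left (abs_add_le c (Real.log u)) _
        _ ≤ |c| * u + u + 2*u := by
            refine add_le_add (add_le_add hc hlu) (by linarith)
        _ ≤ (|c|+5)*u := by nlinarith [abs_nonneg c]
    have hden3 : u^3 ≤ (u+1)^2*(u+ξ) := by nlinarith
    have hu3 : (0:ℝ) < u^3 := by positivity
    have hrw : (|c|+5) * u^(-2:ℝ) = ((|c|+5)*u)/u^3 := by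
      rw [Real.rpow_neg (le_of_lt h0), show ((2:ℝ) = ((2:ℕ):ℝ)) by norm_num,
        Real.rpow_natCast]
      field_simp
    rw [hrw]
    have step1 : |c + Real.log u - 2*Real.log (u+1)| / ((u+1)^2*(u+ξ))
        ≤ ((|c|+5)*u) / ((u+1)^2*(u+ξ)) := by gcongr
    have step2 : ((|c|+5)*u) / ((u+1)^2*(u+ξ)) ≤ ((|c|+5)*u) / u^3 := by
      gcongr
    exact le_trans step1 step2

theorem stmt12 (c ξ : ℝ) (hξ0 : 0 < ξ) (hξ1 : ξ < 1) :
    (∫ u in Set.Ioi (1 : ℝ),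
        (c + Real.log u - 2 * Real.log (u + 1)) / ((u + 1) ^ 2 * (u + ξ))) =
      c * (ξ - 1 + 2 * Real.log (2 / (1 + ξ))) / (2 * (1 - ξ) ^ 2) + 1 / (1 - ξ) -
        (Real.pi ^ 2 + 12 * (Real.log 2) ^ 2) / (12 * (1 - ξ) ^ 2) +
        (2 * (Li2 ((ξ - 1) / ξ) - Li2 ((ξ - 1) / (2 * ξ))) - Li2 (-ξ) +
            2 * Real.log 2 * Real.log ((ξ + 1) / ξ) - (Real.log 2) ^ 2) /
          (1 - ξ) ^ 2 := by
  have key := MeasureTheory.integral_Ioi_of_hasDerivAt_of_tendsto' (a := 1)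
    (f := Fad c ξ)
    (f' := fun u : ℝ => (c + Real.log u - 2 * Real.log (u + 1)) / ((u + 1) ^ 2 * (u + ξ)))
    (fun x hx => hasDerivAt_Fad hξ0 hξ1 (by
      have hx1 : (1:ℝ) ≤ x := hx
      linarith))
    (integrand_integrable c ξ hξ0) (tendsto_Fad hξ0 hξ1)
  rw [key]
  simp only [Fad]
  norm_num
  have h1ξ : (0:ℝ) < 1 + ξ := by linarith
  rw [show (ξ-1)/(ξ*2) = (ξ-1)/(2*ξ) from by ring, Li2_neg_one,
    Real.log_div (by norm_num : (2:ℝ) ≠ 0) (ne_of_gt h1ξ),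
    Real.log_div (by linarith : (ξ:ℝ)+1 ≠ 0) (ne_of_gt hξ0),
    show Real.log (ξ+1) = Real.log (1+ξ) from by rw [add_comm]]
  have hne : (1:ℝ) - ξ ≠ 0 := by linarith
  field_simp
  ring
end
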